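/- Let k > 0 and define g : (0,∞)² → ℝ by g(λ₁, λ₂) = exp((k/2)·(log λ₁ − log λ₂)²). Then g is separately convex (i.e., for every fixed λ₂ > 0 the map λ₁ ↦ g(λ₁, λ₂) is convex on (0,∞), and for every fixed λ₁ > 0 the map λ₂ ↦ g(λ₁, λ₂) is convex on (0,∞)) if and only if k ≥ 1/4. -/

import Mathlib

/-!
Write the energy along either variable as `h ∘ log` with `h t = exp ((k/2) (t - c)²)`. Since
`(h ∘ log)'' x = (h'' - h') (log x) / x²` and `log` maps `(0,∞)` onto `ℝ`, convexity is
equivalent to `h' ≤ h''` on `ℝ`, i.e. to `s ≤ 1 + k s²` for all `s`. The discriminant of this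
quadratic is `1 - 4k`.
-/

open Real Set

theorem convexOn_iff_forall_hasDerivAt2_nonneg {D : Set ℝ} (hD : Convex ℝ D) (hDo : IsOpen D)
    {f f' f'' : ℝ → ℝ} (hf : ∀ x ∈ D, HasDerivAt f (f' x) x)
    (hf' : ∀ x ∈ D, HasDerivAt f' (f'' x) x) :
    ConvexOn ℝ D f ↔ ∀ x ∈ D, 0 ≤ f'' x := by
  constructor
  · intro hconv x hx
    have hmono : MonotoneOn f' D :=
      (hconv.monotoneOn_deriv fun y hy => (hf y hy).differentiableAt).congr
        fun y hy => (hf y hy).deriv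
    exact (hf' x hx).hasDerivWithinAt.nonneg_of_monotoneOn
      (hDo.uniqueDiffWithinAt (𝕜 := ℝ) hx).accPt hmono
  · intro hnonneg
    refine convexOn_of_hasDerivWithinAt2_nonneg hD (f' := f') (f'' := f'')
      (fun x hx => (hf x hx).continuousAt.continuousWithinAt) ?_ ?_ ?_ <;>
      rw [hDo.interior_eq]
    · exact fun x hx => (hf x hx).hasDerivWithinAt
    · exact fun x hx => (hf' x hx).hasDerivWithinAt
    · exact hnonneg

theorem convexOn_Ioi_comp_log_iff {h h' h'' : ℝ → ℝ} (hh : ∀ t, HasDerivAt h (h' t) t)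
    (hh' : ∀ t, HasDerivAt h' (h'' t) t) :
    ConvexOn ℝ (Ioi 0) (h ∘ log) ↔ ∀ t, h' t ≤ h'' t := by
  have hd (x : ℝ) (hx : 0 < x) : HasDerivAt (h ∘ log) (h' (log x) / x) x := by
    simpa [div_eq_mul_inv] using (hh (log x)).comp x (hasDerivAt_log hx.ne')
  have hd2 (x : ℝ) (hx : 0 < x) :
      HasDerivAt (fun y => h' (log y) / y) ((h'' (log x) - h' (log x)) / x ^ 2) x := by
    refine (((hh' (log x)).comp x (hasDerivAt_log hx.ne')).div (hasDerivAt_id' x)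
      hx.ne').congr_deriv ?_
    simp [hx.ne']
  rw [convexOn_iff_forall_hasDerivAt2_nonneg (convex_Ioi 0) isOpen_Ioi hd hd2]
  constructor
  · intro H t
    have hnonneg := H (exp t) (exp_pos t)
    rwa [log_exp, le_div_iff₀ (by positivity), zero_mul, sub_nonneg] at hnonneg
  · intro H x _
    exact div_nonneg (sub_nonneg.mpr (H _)) (sq_nonneg x)

theorem hasDerivAt_exp_mul_sq_sub (k c t : ℝ) :
    HasDerivAt (fun t => exp (k / 2 * (t - c) ^ 2))
      (exp (k / 2 * (t - c) ^ 2) * (k * (t - c))) t :=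
  (((hasDerivAt_id' t).sub_const c).fun_pow 2 |>.const_mul (k / 2)).exp.congr_deriv (by ring)

theorem hasDerivAt_exp_mul_sq_sub_mul (k c t : ℝ) :
    HasDerivAt (fun t => exp (k / 2 * (t - c) ^ 2) * (k * (t - c)))
      (exp (k / 2 * (t - c) ^ 2) * (k * (1 + k * (t - c) ^ 2))) t :=
  ((hasDerivAt_exp_mul_sq_sub k c t).mul
    (((hasDerivAt_id' t).sub_const c).const_mul k)).congr_deriv (by ring)

theorem forall_le_one_add_mul_sq_iff (k : ℝ) : (∀ s : ℝ, s ≤ 1 + k * s ^ 2) ↔ 1 / 4 ≤ k :=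
  ⟨fun H => by linarith [H 2], fun hk s => by nlinarith [sq_nonneg (s - 2)]⟩

theorem convexOn_Ioi_exp_mul_sq_log_sub_iff {k : ℝ} (hk : 0 < k) (c : ℝ) :
    ConvexOn ℝ (Ioi 0) (fun x => exp (k / 2 * (log x - c) ^ 2)) ↔ 1 / 4 ≤ k := by
  have hpos (t : ℝ) : 0 < exp (k / 2 * (t - c) ^ 2) * k := by positivity
  rw [← forall_le_one_add_mul_sq_iff]
  refine (convexOn_Ioi_comp_log_iff (hasDerivAt_exp_mul_sq_sub k c)
    (hasDerivAt_exp_mul_sq_sub_mul k c)).trans ?_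
  simp only [← mul_assoc, mul_le_mul_iff_of_pos_left (hpos _)]
  exact ⟨fun H s => by simpa using H (s + c), fun H t => H (t - c)⟩

theorem planar_g_separatelyConvex_iff (k : ℝ) (hk : 0 < k) :
    ((∀ l2 : ℝ, 0 < l2 →
        ConvexOn ℝ (Set.Ioi (0 : ℝ))
          (fun l1 : ℝ => Real.exp (k / 2 * (Real.log l1 - Real.log l2) ^ 2))) ∧
     (∀ l1 : ℝ, 0 < l1 →
        ConvexOn ℝ (Set.Ioi (0 : ℝ))
          (fun l2 : ℝ => Real.exp (k / 2 * (Real.log l1 - Real.log l2) ^ 2)))) ↔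
    1 / 4 ≤ k := by
  constructor
  · rintro ⟨H, -⟩
    exact (convexOn_Ioi_exp_mul_sq_log_sub_iff hk (log 1)).mp (H 1 one_pos)
  · intro hk4
    refine ⟨fun l2 _ => (convexOn_Ioi_exp_mul_sq_log_sub_iff hk (log l2)).mpr hk4,
      fun l1 _ => ?_⟩
    simpa only [sub_sq_comm (log l1)] using
      (convexOn_Ioi_exp_mul_sq_log_sub_iff hk (log l1)).mpr hk4
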